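/- arXiv:2309.15557 — 8 statements merged into one kernel-verified Lean document; each statement's English description precedes it below -/
import Mathlib

section
/- Let x, y be elements of a field with xy = 1 and x^k ≠ y^k. Then for all n ≥ 0, (y^{kn} - x^{kn})/(y^k - x^k) = F_n(L_k(x + y)), where F_n is the Fibonacci polynomial and L_k the Lucas polynomial. -/
/-! With `a = x^k` and `b = y^k` we have `ab = 1`, and the Lucas polynomial gives
`L_k(x + y) = x^k + y^k = a + b`. Both sides of the identity then satisfy the recurrence
`u_{n+2} = (a + b) u_{n+1} - u_n` with `u_0 = 0`, `u_1 = 1`, because `a` and `b` are the roots of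
`T^2 - (a + b) T + 1`. -/

section

variable {R : Type*} [CommRing R] {x y : R}

theorem lucas_apply_add_eq_pow_add_pow (L : ℕ → R → R)
    (hL0 : ∀ t, L 0 t = 2) (hL1 : ∀ t, L 1 t = t)
    (hLrec : ∀ (n : ℕ) (t : R), L (n + 2) t = t * L (n + 1) t - L n t)
    (h : x * y = 1) (m : ℕ) : L m (x + y) = x ^ m + y ^ m := by
  induction m using Nat.twoStepInduction with
  | zero => rw [hL0]; norm_num
  | one => rw [hL1, pow_one, pow_one]
  | more m ih ih' =>
    rw [hLrec, ih, ih']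
    linear_combination (x ^ m + y ^ m) * h

theorem pow_sub_pow_eq_sub_mul_fibonacci_apply_add (F : ℕ → R → R)
    (hF0 : ∀ t, F 0 t = 0) (hF1 : ∀ t, F 1 t = 1)
    (hFrec : ∀ (n : ℕ) (t : R), F (n + 2) t = t * F (n + 1) t - F n t)
    (h : x * y = 1) (n : ℕ) : y ^ n - x ^ n = (y - x) * F n (x + y) := by
  induction n using Nat.twoStepInduction with
  | zero => rw [hF0]; ring
  | one => rw [hF1]; ring
  | more n ih ih' =>
    rw [hFrec, mul_sub, ← mul_left_comm, ← ih, ← ih']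
    linear_combination (x ^ n - y ^ n) * h

end

theorem fib_lucas_power_identity_general (K : Type*) [Field K] (x y : K) (k : ℕ)
    (h1 : x * y = 1) (hxy : x ^ k ≠ y ^ k)
    (F : ℕ → K → K)
    (hF0 : ∀ t : K, F 0 t = 0) (hF1 : ∀ t : K, F 1 t = 1)
    (hFrec : ∀ (n : ℕ) (t : K), F (n + 2) t = t * F (n + 1) t - F n t)
    (L : ℕ → K → K)
    (hL0 : ∀ t : K, L 0 t = 2) (hL1 : ∀ t : K, L 1 t = t)
    (hLrec : ∀ (n : ℕ) (t : K), L (n + 2) t = t * L (n + 1) t - L n t) :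
    ∀ n : ℕ, (y ^ (k * n) - x ^ (k * n)) / (y ^ k - x ^ k) = F n (L k (x + y)) := by
  intro n
  have hpow : x ^ k * y ^ k = 1 := by rw [← mul_pow, h1, one_pow]
  have hne : y ^ k - x ^ k ≠ 0 := sub_ne_zero.mpr hxy.symm
  rw [lucas_apply_add_eq_pow_add_pow L hL0 hL1 hLrec h1, pow_mul, pow_mul,
    pow_sub_pow_eq_sub_mul_fibonacci_apply_add F hF0 hF1 hFrec hpow, mul_div_cancel_left₀ _ hne]

/-- In a field `K`, if `x * y = 1` and `x^k ≠ y^k` for a fixed positive integer `k`,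
then for all `n ≥ 0`, `(y^(k*n) - x^(k*n)) / (y^k - x^k) = F n (L k (x + y))`. -/
theorem fib_lucas_power_identity (K : Type*) [Field K] (x y : K) (k : ℕ) (hk : 0 < k)
    (h1 : x * y = 1) (hxy : x ^ k ≠ y ^ k)
    (F : ℕ → K → K)
    (hF0 : ∀ t : K, F 0 t = 0) (hF1 : ∀ t : K, F 1 t = 1)
    (hFrec : ∀ (n : ℕ) (t : K), F (n + 2) t = t * F (n + 1) t - F n t)
    (L : ℕ → K → K)
    (hL0 : ∀ t : K, L 0 t = 2) (hL1 : ∀ t : K, L 1 t = t)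
    (hLrec : ∀ (n : ℕ) (t : K), L (n + 2) t = t * L (n + 1) t - L n t) :
    ∀ n : ℕ, (y ^ (k * n) - x ^ (k * n)) / (y ^ k - x ^ k) = F n (L k (x + y)) :=
  fib_lucas_power_identity_general K x y k h1 hxy F hF0 hF1 hFrec L hL0 hL1 hLrec
end

section
/- Let s = (s_k)_{k≥0} be a sequence of real numbers and define a_{n,k} by a_{0,k} = [k = 0], a_{n,k} = 0 for k < 0, and a_{n,k} = a_{n-1,k-1} + s_k·a_{n-1,k} + a_{n-1,k+1}. Then for all m, n ≥ 0, ∑_{k≥0} a_{n,k}·a_{m,k} = a_{n+m,0}. -/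
/-!
The recurrence says `a (n+1) = J (a n)` on `k ≥ 0` for the tridiagonal operator
`(J f) k = f (k-1) + s k * f k + f (k+1)`, which is symmetric for the pairing
`⟨f, g⟩ = ∑_{k ≥ 0} f k * g k` on finitely supported `f, g` vanishing at `-1`
(summation by parts). Hence `⟨a (n+1), a m⟩ = ⟨a n, a (m+1)⟩`, and moving all `n`
steps from the left to the right factor gives `⟨a n, a m⟩ = ⟨a 0, a (n+m)⟩ = a (n+m) 0`.
-/

open Finset

def jacobiOp (s : ℕ → ℝ) (f : ℤ → ℝ) (k : ℤ) : ℝ :=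
  f (k - 1) + s k.toNat * f k + f (k + 1)

theorem sum_range_succ_shift_mul (f g : ℤ → ℝ) (N : ℕ) (hf : f (-1) = 0)
    (hg : g (N + 1) = 0) :
    ∑ k ∈ range (N + 1), f (k - 1) * g k = ∑ k ∈ range (N + 1), f k * g (k + 1) := by
  rw [sum_range_succ', sum_range_succ]
  push_cast
  simp only [add_sub_cancel_right, hf, hg, zero_mul, mul_zero, add_zero]

theorem sum_jacobiOp_mul_comm (s : ℕ → ℝ) (f g : ℤ → ℝ) (N : ℕ)
    (hf : f (-1) = 0) (hg : g (-1) = 0) (hfN : f (N + 1) = 0) (hgN : g (N + 1) = 0) :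
    ∑ k ∈ range (N + 1), jacobiOp s f k * g k =
      ∑ k ∈ range (N + 1), f k * jacobiOp s g k := by
  have expand (u v : ℤ → ℝ) : ∑ k ∈ range (N + 1), jacobiOp s u k * v k =
      ∑ k ∈ range (N + 1), u (k - 1) * v k + ∑ k ∈ range (N + 1), s k * (u k * v k)
        + ∑ k ∈ range (N + 1), v k * u (k + 1) := by
    simp only [← sum_add_distrib, jacobiOp, Int.toNat_natCast]
    exact sum_congr rfl fun _ _ => by ring
  simp_rw [mul_comm (f _) (jacobiOp s g _)]
  rw [expand, expand, sum_range_succ_shift_mul f g N hf hgN,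
    sum_range_succ_shift_mul g f N hg hfN]
  simp_rw [mul_comm (g _) (f _)]
  ring

section Admissible

variable {s : ℕ → ℝ} {a : ℕ → ℤ → ℝ}

theorem admissible_eq_zero_of_lt (h0 : ∀ k : ℤ, a 0 k = if k = 0 then 1 else 0)
    (hrec : ∀ (n : ℕ) (k : ℤ), 0 ≤ k →
      a (n + 1) k = a n (k - 1) + s k.toNat * a n k + a n (k + 1)) :
    ∀ (n : ℕ) (k : ℤ), (n : ℤ) < k → a n k = 0 := by
  intro n
  induction n with
  | zero => intro k hk; rw [h0, if_neg (by omega)]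
  | succ n ih =>
    intro k hk
    push_cast at hk
    rw [hrec n k (by omega), ih (k - 1) (by omega), ih k (by omega), ih (k + 1) (by omega)]
    ring

theorem admissible_sum_range_mul_of_le (h0 : ∀ k : ℤ, a 0 k = if k = 0 then 1 else 0)
    (hrec : ∀ (n : ℕ) (k : ℤ), 0 ≤ k →
      a (n + 1) k = a n (k - 1) + s k.toNat * a n k + a n (k + 1))
    (g : ℤ → ℝ) {n N : ℕ} (h : n ≤ N) :
    ∑ k ∈ range (N + 1), a n k * g k = ∑ k ∈ range (n + 1), a n k * g k := by
  refine (sum_subset (range_subset_range.mpr (by omega)) fun k _ hk => ?_).symm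
  rw [admissible_eq_zero_of_lt h0 hrec n k (by simp at hk; omega), zero_mul]

theorem admissible_sum_succ_mul (h0 : ∀ k : ℤ, a 0 k = if k = 0 then 1 else 0)
    (hneg : ∀ (n : ℕ) (k : ℤ), k < 0 → a n k = 0)
    (hrec : ∀ (n : ℕ) (k : ℤ), 0 ≤ k →
      a (n + 1) k = a n (k - 1) + s k.toNat * a n k + a n (k + 1))
    {n m N : ℕ} (hn : n ≤ N) (hm : m ≤ N) :
    ∑ k ∈ range (N + 1), a (n + 1) k * a m k = ∑ k ∈ range (N + 1), a n k * a (m + 1) k := by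
  have hJ (p : ℕ) (k : ℕ) : a (p + 1) k = jacobiOp s (a p) k := hrec p k k.cast_nonneg
  simp_rw [hJ]
  exact sum_jacobiOp_mul_comm s (a n) (a m) N (hneg n _ (by omega)) (hneg m _ (by omega))
    (admissible_eq_zero_of_lt h0 hrec n _ (by omega))
    (admissible_eq_zero_of_lt h0 hrec m _ (by omega))

end Admissible

/-- For the admissible matrix `a` of a sequence `s`,
`∑_{k ≥ 0} a n k * a m k = a (n+m) 0`. The sum is finite since `a n k = 0`
for `k > n`, so it can be taken over `0 ≤ k ≤ n`. -/
theorem admissible_orthogonality (s : ℕ → ℝ) (a : ℕ → ℤ → ℝ)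
    (h0 : ∀ k : ℤ, a 0 k = if k = 0 then 1 else 0)
    (hneg : ∀ (n : ℕ) (k : ℤ), k < 0 → a n k = 0)
    (hrec : ∀ (n : ℕ) (k : ℤ), 0 ≤ k →
      a (n + 1) k = a n (k - 1) + s k.toNat * a n k + a n (k + 1)) :
    ∀ m n : ℕ, ∑ k ∈ Finset.range (n + 1), a n (k : ℤ) * a m (k : ℤ) = a (n + m) 0 := by
  intro m n
  induction n generalizing m with
  | zero => simp [h0]
  | succ n ih =>
    calc ∑ k ∈ range (n + 1 + 1), a (n + 1) k * a m k
        = ∑ k ∈ range (n + m + 1 + 1), a (n + 1) k * a m k :=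
          (admissible_sum_range_mul_of_le h0 hrec _ (by omega)).symm
      _ = ∑ k ∈ range (n + m + 1 + 1), a n k * a (m + 1) k :=
          admissible_sum_succ_mul h0 hneg hrec (by omega) (by omega)
      _ = ∑ k ∈ range (n + 1), a n k * a (m + 1) k :=
          admissible_sum_range_mul_of_le h0 hrec _ (by omega)
      _ = a (n + 1 + m) 0 := by rw [ih, Nat.add_right_comm, Nat.add_assoc]
end

section
/- With a_{n,k} defined by the admissible-matrix recurrence, a_{n,n} = 1 for all n ≥ 0 and a_{n,k} = 0 for k > n; hence the Hankel determinant det(a_{i+j,0})_{i,j=0}^{n-1} = 1 for every n ≥ 1. -/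
/-!
The recurrence says that row `n + 1` of `a` is row `n` multiplied by the tridiagonal
Jacobi matrix `J` with `1` off the diagonal and `s` on it, so `a n k = (J ^ n) 0 k`.
Since `J` is symmetric, `(J ^ (m + n)) 0 0 = ∑ₖ (J ^ m) 0 k (J ^ n) 0 k`, i.e. the Hankel
matrix is `A Aᵀ` with `A = (a i k)`. The rows of `a` are supported on `k ≤ n` with
`a n n = 1`, so `A` is lower unitriangular and `det (A Aᵀ) = 1`.
-/

open Finset
open scoped Matrix

def jacobi {R : Type*} [Semiring R] (s : ℕ → R) (u : ℤ → R) (k : ℤ) : R :=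
  u (k - 1) + s k.toNat * u k + u (k + 1)

theorem sum_range_mul_shift {R : Type*} [NonUnitalNonAssocSemiring R] (u v : ℤ → R) (N : ℕ)
    (h₀ : u (-1) * v 0 = 0) (hN : u N * v (N + 1) = 0) :
    ∑ k ∈ range (N + 1), u (k - 1) * v k = ∑ k ∈ range (N + 1), u k * v (k + 1) := by
  rw [sum_range_succ', sum_range_succ]
  simp only [Nat.cast_zero, zero_sub, h₀, hN, Nat.cast_add, Nat.cast_one, add_sub_cancel_right]

theorem sum_range_jacobi_mul {R : Type*} [CommSemiring R] (s : ℕ → R) (u v : ℤ → R) (N : ℕ)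
    (hu : u (-1) = 0) (hv : v (-1) = 0) (hvN : v N = 0) (hvN' : v (N + 1) = 0) :
    ∑ k ∈ range (N + 1), jacobi s u k * v k = ∑ k ∈ range (N + 1), u k * jacobi s v k := by
  have down := sum_range_mul_shift u v N (by rw [hu, zero_mul]) (by rw [hvN', mul_zero])
  have up : ∑ k ∈ range (N + 1), u (k + 1) * v k = ∑ k ∈ range (N + 1), u k * v (k - 1) := by
    simpa only [mul_comm] using
      (sum_range_mul_shift v u N (by rw [hv, zero_mul]) (by rw [hvN, zero_mul])).symm
  have diag : ∑ k ∈ range (N + 1), s k * u k * v k = ∑ k ∈ range (N + 1), u k * (s k * v k) :=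
    sum_congr rfl fun _ _ => by ring
  simp only [jacobi, add_mul, mul_add, sum_add_distrib, Int.toNat_natCast]
  rw [down, up, diag]
  ring

structure IsAdmissible {R : Type*} [Semiring R] (s : ℕ → R) (a : ℕ → ℤ → R) : Prop where
  zero : ∀ k, a 0 k = if k = 0 then 1 else 0
  neg : ∀ n k, k < 0 → a n k = 0
  succ : ∀ n k, 0 ≤ k → a (n + 1) k = jacobi s (a n) k

namespace IsAdmissible

section Semiring

variable {R : Type*} [Semiring R] {s : ℕ → R} {a : ℕ → ℤ → R}

theorem apply_eq_zero_of_lt (ha : IsAdmissible s a) {n : ℕ} {k : ℤ} (hk : (n : ℤ) < k) :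
    a n k = 0 := by
  induction n generalizing k with
  | zero => rw [ha.zero, if_neg (by omega)]
  | succ n ih =>
    rw [ha.succ n k (by omega), jacobi, ih (by omega), ih (by omega), ih (by omega)]
    simp

theorem apply_self (ha : IsAdmissible s a) (n : ℕ) : a n n = 1 := by
  induction n with
  | zero => simp [ha.zero]
  | succ n ih =>
    rw [Nat.cast_succ, ha.succ n _ (by omega), jacobi, add_sub_cancel_right, ih,
      ha.apply_eq_zero_of_lt (by omega), ha.apply_eq_zero_of_lt (by omega)]
    simp

end Semiring

section CommSemiring

variable {R : Type*} [CommSemiring R] {s : ℕ → R} {a : ℕ → ℤ → R}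

theorem apply_add_zero_eq_sum (ha : IsAdmissible s a) (m n N : ℕ) (hN : n < N) :
    a (m + n) 0 = ∑ k ∈ range N, a m k * a n k := by
  induction n generalizing m with
  | zero =>
    rw [sum_eq_single_of_mem 0 (mem_range.2 hN) fun k _ hk => by simp [ha.zero, hk]]
    simp [ha.zero]
  | succ n ih =>
    obtain ⟨N, rfl⟩ : ∃ N', N = N' + 1 := ⟨N - 1, by omega⟩
    calc a (m + (n + 1)) 0 = a (m + 1 + n) 0 := by rw [add_right_comm, add_assoc]
      _ = ∑ k ∈ range (N + 1), a (m + 1) k * a n k := ih (m + 1) (by omega)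
      _ = ∑ k ∈ range (N + 1), jacobi s (a m) k * a n k :=
        sum_congr rfl fun k _ => by rw [ha.succ m k (by omega)]
      _ = ∑ k ∈ range (N + 1), a m k * jacobi s (a n) k :=
        sum_range_jacobi_mul s _ _ N (ha.neg _ _ (by omega)) (ha.neg _ _ (by omega))
          (ha.apply_eq_zero_of_lt (by omega)) (ha.apply_eq_zero_of_lt (by omega))
      _ = ∑ k ∈ range (N + 1), a m k * a (n + 1) k :=
        sum_congr rfl fun k _ => by rw [ha.succ n k (by omega)]

end CommSemiring

section CommRing

variable {R : Type*} [CommRing R] {s : ℕ → R} {a : ℕ → ℤ → R}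

theorem hankel_eq_mul_transpose (ha : IsAdmissible s a) (n : ℕ) :
    Matrix.of (fun i j : Fin n => a ((i : ℕ) + (j : ℕ)) 0) =
      Matrix.of (fun i k : Fin n => a i k) * (Matrix.of fun i k : Fin n => a i k)ᵀ := by
  ext i j
  rw [Matrix.of_apply, ha.apply_add_zero_eq_sum i j n j.isLt, Matrix.mul_apply,
    ← Fin.sum_univ_eq_sum_range (fun k => a i k * a j k)]
  rfl

theorem det_hankel (ha : IsAdmissible s a) (n : ℕ) :
    Matrix.det (Matrix.of fun i j : Fin n => a ((i : ℕ) + (j : ℕ)) 0) = 1 := by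
  have hlower : (Matrix.of fun i k : Fin n => a i k).IsLowerTriangular :=
    fun i k hik => ha.apply_eq_zero_of_lt (Nat.cast_lt.2 hik)
  rw [hankel_eq_mul_transpose ha, Matrix.det_mul, Matrix.det_transpose,
    Matrix.det_of_isLowerTriangular _ hlower]
  simp [ha.apply_self]

end CommRing

end IsAdmissible

/-- For the admissible matrix `a` of a sequence `s`: `a n n = 1`, `a n k = 0` for
`k > n`, and the Hankel determinant `det (a (i+j) 0)_{i,j=0}^{n-1} = 1` for `n ≥ 1`. -/
theorem admissible_hankel_det_one (s : ℕ → ℝ) (a : ℕ → ℤ → ℝ)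
    (h0 : ∀ k : ℤ, a 0 k = if k = 0 then 1 else 0)
    (hneg : ∀ (n : ℕ) (k : ℤ), k < 0 → a n k = 0)
    (hrec : ∀ (n : ℕ) (k : ℤ), 0 ≤ k →
      a (n + 1) k = a n (k - 1) + s k.toNat * a n k + a n (k + 1)) :
    (∀ n : ℕ, a n (n : ℤ) = 1) ∧
    (∀ (n : ℕ) (k : ℤ), (n : ℤ) < k → a n k = 0) ∧
    (∀ n : ℕ, 1 ≤ n →
      Matrix.det (Matrix.of fun i j : Fin n => a ((i : ℕ) + (j : ℕ)) 0) = 1) := by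
  have ha : IsAdmissible s a := ⟨h0, hneg, hrec⟩
  exact ⟨ha.apply_self, fun _ _ => ha.apply_eq_zero_of_lt, fun n _ => ha.det_hankel n⟩
end

section
/- For the constant sequence s = (c, c, c, ...), the shifted Hankel determinant D_{1,n}(c) = det(a_{i+j+1,0}(c))_{i,j=0}^{n-1} equals F_{n+1}(c), the (n+1)-st Fibonacci polynomial evaluated at c. -/
set_option linter.unusedSectionVars false
set_option linter.unusedTactic false

noncomputable def tnat (c : ℝ) (k l : ℕ) : ℝ :=
  if k = l then c else if k + 1 = l ∨ l + 1 = k then 1 else 0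

lemma tnat_succ (c : ℝ) (k l : ℕ) : tnat c (k+1) (l+1) = tnat c k l := by
  unfold tnat; split_ifs <;> first | rfl | omega

lemma detT (c : ℝ) (F : ℕ → ℝ → ℝ)
    (hF0 : ∀ t : ℝ, F 0 t = 0) (hF1 : ∀ t : ℝ, F 1 t = 1)
    (hFrec : ∀ (n : ℕ) (t : ℝ), F (n + 2) t = t * F (n + 1) t - F n t) :
    ∀ n : ℕ, (Matrix.of fun k l : Fin n => tnat c k l).det = F (n + 1) c := by
  intro n
  induction n using Nat.twoStepInduction with
  | zero => simp [hF1]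
  | one =>
      rw [Matrix.det_fin_one]
      simp [tnat, hFrec, hF0, hF1]
  | more n ih1 ih2 =>
      rw [Matrix.det_succ_row_zero, Fin.sum_univ_succ, Fin.sum_univ_succ]
      have h2 : ∀ j : Fin n, tnat c (0:Fin (n+2)) (j.succ.succ) = 0 := by
        intro j; simp [tnat, Fin.val_succ]
      simp only [Matrix.of_apply, h2, mul_zero, zero_mul, Finset.sum_const_zero, add_zero]
      have e1 : ((Matrix.of fun k l : Fin (n+2) => tnat c k l).submatrix Fin.succ
          (Fin.succAbove 0)).det = F (n + 2) c := by
        rw [← ih2]; congr 1; ext k l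
        simp [Fin.succAbove_zero, Fin.val_succ, tnat_succ]
      have hone : ((Fin.succ 0 : Fin (n+2)).succAbove 0 : ℕ) = 0 := by
        simp [Fin.succAbove]
      have e2 : ((Matrix.of fun k l : Fin (n+2) => tnat c k l).submatrix Fin.succ
          (Fin.succ 0).succAbove).det = F (n + 1) c := by
        rw [Matrix.det_succ_column_zero, Fin.sum_univ_succ]
        have hcol : ∀ i : Fin n,
            ((Matrix.of fun k l : Fin (n+2) => tnat c k l).submatrix Fin.succ
              (Fin.succ 0).succAbove) i.succ 0 = 0 := by
          intro i
          simp [Matrix.submatrix_apply, tnat, Fin.val_succ, hone]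
        simp only [hcol, mul_zero, zero_mul, Finset.sum_const_zero, add_zero]
        have hB00 : ((Matrix.of fun k l : Fin (n+2) => tnat c k l).submatrix Fin.succ
            (Fin.succ 0).succAbove) 0 0 = 1 := by
          simp [Matrix.submatrix_apply, tnat, hone]
        rw [hB00, ← ih1]
        have hmm : (((Matrix.of fun k l : Fin (n+2) => tnat c k l).submatrix Fin.succ
            (Fin.succ 0).succAbove).submatrix (Fin.succAbove 0) Fin.succ) =
            (Matrix.of fun k l : Fin n => tnat c k l) := by
          ext k l
          have hc : ((Fin.succ 0 : Fin (n+2)).succAbove l.succ : ℕ) = (l : ℕ) + 2 := by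
            rw [show (Fin.succ 0 : Fin (n+2)) = (0 : Fin (n+1)).succ from rfl,
              Fin.succ_succAbove_succ]
            simp [Fin.succAbove_zero, Fin.val_succ]
          simp [Matrix.submatrix_apply, Fin.succAbove_zero, Fin.val_succ, hc]
          rw [show (k:ℕ)+1+1 = k+2 from rfl, show (l:ℕ)+2 = l+1+1 from rfl, tnat_succ, tnat_succ]
        rw [hmm]
        simp
      rw [e1, e2]
      simp [tnat]
      rw [hFrec (n+1) c]
      ring

section
variable (c : ℝ) (a : ℕ → ℤ → ℝ)
    (h0 : ∀ k : ℤ, a 0 k = if k = 0 then 1 else 0)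
    (hneg : ∀ (n : ℕ) (k : ℤ), k < 0 → a n k = 0)
    (hrec : ∀ (n : ℕ) (k : ℤ), 0 ≤ k →
      a (n + 1) k = a n (k - 1) + c * a n k + a n (k + 1))

include h0 hneg hrec

lemma vanish : ∀ (n : ℕ) (k : ℤ), (n : ℤ) < k → a n k = 0 := by
  intro n
  induction n with
  | zero => intro k hk; rw [h0]; simp; omega
  | succ n ih =>
      intro k hk
      rw [hrec n k (by push_cast at hk ⊢; omega)]
      rw [ih (k-1) (by push_cast at hk ⊢; omega), ih k (by push_cast at hk ⊢; omega),
        ih (k+1) (by push_cast at hk ⊢; omega)]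
      ring

lemma diag : ∀ n : ℕ, a n n = 1 := by
  intro n
  induction n with
  | zero => rw [h0]; simp
  | succ n ih =>
      push_cast
      rw [hrec n ((n:ℤ)+1) (by positivity)]
      rw [vanish c a h0 hneg hrec n ((n:ℤ)+1) (by omega),
        vanish c a h0 hneg hrec n ((n:ℤ)+1+1) (by omega)]
      simpa using ih

omit h0 hneg hrec in
lemma shiftsum (N : ℕ) (f g : ℤ → ℝ) (hg : g (N : ℤ) = 0) (hf : f (-1) = 0) :
    ∑ k ∈ Finset.range N, f ((k : ℤ) - 1) * g k
      = ∑ k ∈ Finset.range N, f k * g ((k : ℤ) + 1) := by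
  cases N with
  | zero => simp
  | succ M =>
      rw [Finset.sum_range_succ' (fun k => f ((k : ℤ) - 1) * g k),
        Finset.sum_range_succ (fun k => f k * g ((k : ℤ) + 1))]
      push_cast at hg ⊢
      rw [hf, hg]
      simp only [zero_mul, mul_zero, add_zero]
      apply Finset.sum_congr rfl
      intro k _
      norm_num

lemma sumid : ∀ (m : ℕ) (j N : ℕ), m + j < N →
    ∑ k ∈ Finset.range N, a m k * a j k = a (m + j) 0 := by
  intro m
  induction m with
  | zero =>
      intro j N hN
      rw [Finset.sum_eq_single 0]
      · simp [h0]
      · intro k _ hk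
        rw [h0]
        have : ((k:ℤ) ≠ 0) := by exact_mod_cast hk
        simp [this, hk]
      · intro h; exact absurd (Finset.mem_range.mpr (by omega)) h
  | succ m ih =>
      intro j N hN
      have hS1 : ∑ k ∈ Finset.range N, a m ((k:ℤ)-1) * a j k
          = ∑ k ∈ Finset.range N, a m k * a j ((k:ℤ)+1) :=
        shiftsum N (a m) (a j) (vanish c a h0 hneg hrec j N (by push_cast; omega))
          (hneg m (-1) (by omega))
      have hS3' : ∑ k ∈ Finset.range N, a j ((k:ℤ)-1) * a m k
          = ∑ k ∈ Finset.range N, a j k * a m ((k:ℤ)+1) :=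
        shiftsum N (a j) (a m) (vanish c a h0 hneg hrec m N (by push_cast; omega))
          (hneg j (-1) (by omega))
      have key : ∑ k ∈ Finset.range N, a (m+1) k * a j k
          = ∑ k ∈ Finset.range N, a m k * a (j+1) k := by
        have expand : ∀ k ∈ Finset.range N, a (m+1) (k:ℤ) * a j k
            = a m ((k:ℤ)-1) * a j k + c * (a m k * a j k) + a m ((k:ℤ)+1) * a j k := by
          intro k _
          rw [hrec m k (by positivity)]; ring
        have expand2 : ∀ k ∈ Finset.range N, a m (k:ℤ) * a (j+1) k
            = a j ((k:ℤ)-1) * a m k + c * (a m k * a j k) + a j ((k:ℤ)+1) * a m k := by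
          intro k _
          rw [hrec j k (by positivity)]; ring
        rw [Finset.sum_congr rfl expand, Finset.sum_congr rfl expand2,
          Finset.sum_add_distrib, Finset.sum_add_distrib,
          Finset.sum_add_distrib, Finset.sum_add_distrib, hS1, hS3']
        have comm1 : ∑ k ∈ Finset.range N, a m ((k:ℤ)+1) * a j k
            = ∑ k ∈ Finset.range N, a j k * a m ((k:ℤ)+1) := by
          apply Finset.sum_congr rfl; intros; ring
        have comm2 : ∑ k ∈ Finset.range N, a m (k:ℤ) * a j ((k:ℤ)+1)
            = ∑ k ∈ Finset.range N, a j ((k:ℤ)+1) * a m k := by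
          apply Finset.sum_congr rfl; intros; ring
        rw [comm1, comm2]
        ring
      rw [key, ih (j+1) N (by omega)]
      congr 1
      omega

lemma rowsum (n j k : ℕ) (hk : k < n) (hj : j < n) :
    ∑ l ∈ Finset.range n, tnat c k l * a j l = a (j+1) k := by
  have vanish' := vanish c a h0 hneg hrec
  have split : ∀ l ∈ Finset.range n, tnat c k l * a j l =
      (if k = l then c * a j l else 0) + ((if l = k+1 then a j l else 0)
        + (if k = l+1 then a j l else 0)) := by
    intro l _
    unfold tnat; split_ifs <;> first | (exfalso; omega) | ring
  rw [Finset.sum_congr rfl split, Finset.sum_add_distrib, Finset.sum_add_distrib,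
    Finset.sum_ite_eq, Finset.sum_ite_eq']
  have hb : (if k + 1 ∈ Finset.range n then a j ↑(k+1) else 0) = a j ((k:ℤ)+1) := by
    by_cases h : k + 1 < n
    · simp [Finset.mem_range.mpr h]
    · rw [if_neg (by simpa using h)]
      rw [vanish' j ((k:ℤ)+1) (by push_cast; omega)]
  have hc : (∑ l ∈ Finset.range n, if k = l+1 then a j ↑l else 0) = a j ((k:ℤ)-1) := by
    cases k with
    | zero =>
        rw [Finset.sum_eq_zero (fun l _ => by simp)]
        rw [show ((0:ℕ):ℤ) - 1 = -1 by norm_num]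
        exact (hneg j (-1) (by omega)).symm
    | succ m =>
        have : ∀ l ∈ Finset.range n, (if m + 1 = l+1 then a j (l:ℤ) else 0)
            = (if l = m then a j (l:ℤ) else 0) := by
          intro l _; apply if_congr (by omega) rfl rfl
        rw [Finset.sum_congr rfl this, Finset.sum_ite_eq',
          if_pos (Finset.mem_range.mpr (by omega))]
        norm_num
  rw [hb, hc, if_pos (Finset.mem_range.mpr hk), hrec j k (by positivity)]
  ring

lemma trunc (n i j : ℕ) (hi : i < n) :
    ∑ k ∈ Finset.range n, a i k * a j k = a (i+j) 0 := by
  rw [Finset.sum_subset (Finset.range_subset_range.mpr (le_max_left n (i+j+1)))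
    (fun x hx hxn => by
      rw [vanish c a h0 hneg hrec i x (by
        have := Finset.mem_range.not.mp hxn
        push_cast; omega), zero_mul])]
  exact sumid c a h0 hneg hrec i j _ (by omega)

end

/-- For the constant sequence `s = (c, c, c, …)`, the shifted Hankel determinant
`det (a (i+j+1) 0)_{i,j=0}^{n-1}` equals `F (n+1) c`, the `(n+1)`-st Fibonacci
polynomial evaluated at `c`. -/
theorem constant_shifted_hankel_fib (c : ℝ) (a : ℕ → ℤ → ℝ)
    (h0 : ∀ k : ℤ, a 0 k = if k = 0 then 1 else 0)
    (hneg : ∀ (n : ℕ) (k : ℤ), k < 0 → a n k = 0)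
    (hrec : ∀ (n : ℕ) (k : ℤ), 0 ≤ k →
      a (n + 1) k = a n (k - 1) + c * a n k + a n (k + 1))
    (F : ℕ → ℝ → ℝ)
    (hF0 : ∀ t : ℝ, F 0 t = 0) (hF1 : ∀ t : ℝ, F 1 t = 1)
    (hFrec : ∀ (n : ℕ) (t : ℝ), F (n + 2) t = t * F (n + 1) t - F n t) :
    ∀ n : ℕ,
      Matrix.det (Matrix.of fun i j : Fin n => a ((i : ℕ) + (j : ℕ) + 1) 0) = F (n + 1) c := by
  intro n
  have van := vanish c a h0 hneg hrec
  have hdiag := diag c a h0 hneg hrec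
  set T : Matrix (Fin n) (Fin n) ℝ := Matrix.of fun k l : Fin n => tnat c k l with hT
  set M : Matrix (Fin n) (Fin n) ℝ := Matrix.of fun k j : Fin n => a j k with hM
  have hTM : T * M = Matrix.of fun k j : Fin n => a ((j:ℕ)+1) k := by
    ext k j
    rw [Matrix.mul_apply]
    simp only [hT, hM, Matrix.of_apply]
    rw [Fin.sum_univ_eq_sum_range (fun l => tnat c k l * a j l) n]
    exact rowsum c a h0 hneg hrec n j k k.isLt j.isLt
  have hH : (Matrix.of fun i j : Fin n => a ((i : ℕ) + (j : ℕ) + 1) 0) = M.transpose * (T * M) := by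
    rw [hTM]
    ext i j
    rw [Matrix.mul_apply]
    simp only [hM, Matrix.transpose_apply, Matrix.of_apply]
    rw [Fin.sum_univ_eq_sum_range (fun k => a i k * a ((j:ℕ)+1) k) n]
    rw [trunc c a h0 hneg hrec n i ((j:ℕ)+1) i.isLt,
      show (i:ℕ) + ((j:ℕ) + 1) = (i:ℕ) + (j:ℕ) + 1 from by omega]
  rw [hH, Matrix.det_mul, Matrix.det_mul, Matrix.det_transpose]
  have hMdet : M.det = 1 := by
    rw [Matrix.det_of_upperTriangular (M := M)]
    · rw [Finset.prod_eq_one]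
      intro i _
      simp only [hM, Matrix.of_apply]
      exact hdiag i
    · intro i j hij
      simp only [hM, Matrix.of_apply]
      exact van j i (by exact_mod_cast hij)
  rw [hMdet, detT c F hF0 hF1 hFrec n]
  ring
end

section
/- Desnanot–Jacobi condensation: for an n×n matrix A with n ≥ 2, det(A)·det(A with first and last rows and columns removed) = det(A with first row and column removed)·det(A with last row and column removed) - det(A with first row, last column removed)·det(A with last row, first column removed). -/
open Matrix

namespace DesnanotJacobiAux

variable {R : Type*} [CommRing R] {n : ℕ}

/-- The middle indices of `Fin (n+2)`. -/
def mid (n : ℕ) (k : Fin n) : Fin (n + 2) := k.castSucc.succ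

lemma mid_ne_zero (k : Fin n) : mid n k ≠ 0 := Fin.succ_ne_zero _

lemma mid_ne_last (k : Fin n) : mid n k ≠ Fin.last (n + 1) := by
  rw [mid, Fin.succ_castSucc]
  exact (Fin.castSucc_lt_last _).ne

lemma mid_inj {k l : Fin n} (h : mid n k = mid n l) : k = l := by
  have := congrArg Fin.val h
  simp only [mid, Fin.val_succ, Fin.coe_castSucc] at this
  exact Fin.ext (by omega)

lemma last_ne_zero' : (Fin.last (n + 1) : Fin (n + 2)) ≠ 0 := by
  simp [Fin.ext_iff]

/-- The equiv realizing `Fin 2 ⊕ Fin n ≃ Fin (n+2)` sending `inl 0 ↦ 0`,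
`inl 1 ↦ last`, `inr k ↦ k+1`. -/
noncomputable def e (n : ℕ) : Fin 2 ⊕ Fin n ≃ Fin (n + 2) :=
  Equiv.ofBijective
    (Sum.elim (fun i => if (i : ℕ) = 0 then (0 : Fin (n + 2)) else Fin.last (n + 1))
      (mid n))
    (by
      rw [Fintype.bijective_iff_injective_and_card]
      refine ⟨?_, by simp only [Fintype.card_sum, Fintype.card_fin]; omega⟩
      rintro (i | k) (j | l) h <;>
        simp only [Sum.elim_inl, Sum.elim_inr, mid, Fin.ext_iff, apply_ite Fin.val,
          Fin.val_last, Fin.val_zero, Fin.val_succ, Fin.coe_castSucc] at h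
      · have hi := i.isLt; have hj := j.isLt
        have : (i : ℕ) = (j : ℕ) := by split_ifs at h <;> omega
        exact congrArg Sum.inl (Fin.ext this)
      · exfalso; have := l.isLt; split_ifs at h <;> omega
      · exfalso; have := k.isLt; split_ifs at h <;> omega
      · exact congrArg Sum.inr (Fin.ext (by omega)))

@[simp] lemma e_inl_zero : e n (Sum.inl 0) = 0 := by simp [e]
@[simp] lemma e_inl_one : e n (Sum.inl 1) = Fin.last (n + 1) := by simp [e]
@[simp] lemma e_inr (k : Fin n) : e n (Sum.inr k) = mid n k := by simp [e]

/-- The auxiliary matrix: first and last columns come from the adjugate of `A`,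
middle columns are standard basis vectors. -/
noncomputable def B (A : Matrix (Fin (n + 2)) (Fin (n + 2)) R) :
    Matrix (Fin (n + 2)) (Fin (n + 2)) R :=
  Matrix.of fun i j =>
    if j = 0 then adjugate A i 0
    else if j = Fin.last (n + 1) then adjugate A i (Fin.last (n + 1))
    else if i = j then 1 else 0

lemma B_col_zero (A : Matrix (Fin (n + 2)) (Fin (n + 2)) R) (i : Fin (n + 2)) :
    B A i 0 = adjugate A i 0 := by simp [B]

lemma B_col_last (A : Matrix (Fin (n + 2)) (Fin (n + 2)) R) (i : Fin (n + 2)) :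
    B A i (Fin.last (n + 1)) = adjugate A i (Fin.last (n + 1)) := by
  simp [B, last_ne_zero']

lemma B_col_mid (A : Matrix (Fin (n + 2)) (Fin (n + 2)) R) (i : Fin (n + 2)) (k : Fin n) :
    B A i (mid n k) = if i = mid n k then 1 else 0 := by
  simp [B, mid_ne_zero k, mid_ne_last k]

lemma mulB_col_zero (A : Matrix (Fin (n + 2)) (Fin (n + 2)) R) (i : Fin (n + 2)) :
    (A * B A) i 0 = A.det * (if i = 0 then 1 else 0) := by
  have : (A * B A) i 0 = (A * adjugate A) i 0 := by
    simp [mul_apply, B_col_zero]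
  rw [this, mul_adjugate]
  simp [Matrix.one_apply]

lemma mulB_col_last (A : Matrix (Fin (n + 2)) (Fin (n + 2)) R) (i : Fin (n + 2)) :
    (A * B A) i (Fin.last (n + 1)) = A.det * (if i = Fin.last (n + 1) then 1 else 0) := by
  have : (A * B A) i (Fin.last (n + 1)) = (A * adjugate A) i (Fin.last (n + 1)) := by
    simp [mul_apply, B_col_last]
  rw [this, mul_adjugate]
  simp [Matrix.one_apply]

lemma mulB_col_mid (A : Matrix (Fin (n + 2)) (Fin (n + 2)) R) (i : Fin (n + 2)) (k : Fin n) :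
    (A * B A) i (mid n k) = A i (mid n k) := by
  simp [mul_apply, B_col_mid, mul_ite]

lemma detAB (A : Matrix (Fin (n + 2)) (Fin (n + 2)) R) :
    (A * B A).det = A.det ^ 2 * (A.submatrix (mid n) (mid n)).det := by
  rw [← det_submatrix_equiv_self (e n) (A * B A)]
  have hblock : (A * B A).submatrix (e n) (e n) =
      fromBlocks (A.det • (1 : Matrix (Fin 2) (Fin 2) R))
        (Matrix.of fun i k => A (e n (Sum.inl i)) (mid n k)) 0
        (A.submatrix (mid n) (mid n)) := by
    ext i j
    rcases i with i | k <;> rcases j with j | l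
    · fin_cases i <;> fin_cases j <;>
        simp [mulB_col_zero, mulB_col_last, Matrix.one_apply, last_ne_zero',
          last_ne_zero'.symm]
    · simp [mulB_col_mid]
    · fin_cases j <;>
        simp [mulB_col_zero, mulB_col_last, mid_ne_zero k, mid_ne_last k]
    · simp [mulB_col_mid]
  rw [hblock, det_fromBlocks_zero₂₁, det_smul, det_one, mul_one]
  simp

lemma detB (A : Matrix (Fin (n + 2)) (Fin (n + 2)) R) :
    (B A).det = adjugate A 0 0 * adjugate A (Fin.last (n + 1)) (Fin.last (n + 1)) -
      adjugate A 0 (Fin.last (n + 1)) * adjugate A (Fin.last (n + 1)) 0 := by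
  rw [← det_submatrix_equiv_self (e n) (B A)]
  have hblock : (B A).submatrix (e n) (e n) =
      fromBlocks
        !![adjugate A 0 0, adjugate A 0 (Fin.last (n + 1));
           adjugate A (Fin.last (n + 1)) 0, adjugate A (Fin.last (n + 1)) (Fin.last (n + 1))]
        0
        (Matrix.of fun k i => B A (mid n k) (e n (Sum.inl i)))
        (1 : Matrix (Fin n) (Fin n) R) := by
    ext i j
    rcases i with i | k <;> rcases j with j | l
    · fin_cases i <;> fin_cases j <;>
        simp [B_col_zero, B_col_last]
    · fin_cases i <;>
        simp [B_col_mid, (mid_ne_zero l).symm, (mid_ne_last l).symm]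
    · simp
    · rw [submatrix_apply, e_inr, e_inr, B_col_mid, fromBlocks_apply₂₂]
      by_cases h : k = l
      · simp [h, Matrix.one_apply]
      · rw [if_neg (fun hh => h (mid_inj hh)), Matrix.one_apply_ne h]
  rw [hblock, det_fromBlocks_zero₁₂, det_one, mul_one, det_fin_two_of]

lemma adj_zero_zero (A : Matrix (Fin (n + 2)) (Fin (n + 2)) R) :
    adjugate A 0 0 = (A.submatrix Fin.succ Fin.succ).det := by
  rw [adjugate_fin_succ_eq_det_submatrix]
  simp

lemma adj_last_last (A : Matrix (Fin (n + 2)) (Fin (n + 2)) R) :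
    adjugate A (Fin.last (n + 1)) (Fin.last (n + 1)) =
      (A.submatrix Fin.castSucc Fin.castSucc).det := by
  rw [adjugate_fin_succ_eq_det_submatrix, Fin.succAbove_last]
  rw [Even.neg_one_pow ⟨(Fin.last (n + 1) : Fin (n + 2)).val, rfl⟩, one_mul]

lemma adj_cross (A : Matrix (Fin (n + 2)) (Fin (n + 2)) R) :
    adjugate A 0 (Fin.last (n + 1)) * adjugate A (Fin.last (n + 1)) 0 =
      (A.submatrix Fin.castSucc Fin.succ).det * (A.submatrix Fin.succ Fin.castSucc).det := by
  rw [adjugate_fin_succ_eq_det_submatrix, adjugate_fin_succ_eq_det_submatrix,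
    Fin.succAbove_last, Fin.succAbove_zero]
  simp only [Fin.val_zero, Fin.val_last, add_zero, zero_add]
  rw [mul_mul_mul_comm, ← pow_add, Even.neg_one_pow ⟨n + 1, rfl⟩, one_mul]

lemma key (A : Matrix (Fin (n + 2)) (Fin (n + 2)) R) :
    A.det * (A.det * (A.submatrix (mid n) (mid n)).det) =
      A.det * ((A.submatrix Fin.succ Fin.succ).det *
          (A.submatrix Fin.castSucc Fin.castSucc).det -
        (A.submatrix Fin.succ Fin.castSucc).det *
          (A.submatrix Fin.castSucc Fin.succ).det) := by
  have h1 : A.det * (B A).det = A.det ^ 2 * (A.submatrix (mid n) (mid n)).det := by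
    rw [← det_mul, detAB]
  rw [detB, adj_zero_zero, adj_last_last, adj_cross] at h1
  linear_combination -h1

end DesnanotJacobiAux

/-- Desnanot–Jacobi condensation: for an `n × n` matrix `A` with `n ≥ 2` (here of size
`n + 2`), `det A * det (inner minor) = det A₁¹ * det Aₙⁿ - det A₁ⁿ * det Aₙ¹`, where
superscripts/subscripts denote deleted rows/columns. -/
theorem desnanot_jacobi (R : Type*) [CommRing R] (n : ℕ)
    (A : Matrix (Fin (n + 2)) (Fin (n + 2)) R) :
    A.det * (A.submatrix (fun i : Fin n => i.castSucc.succ)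
        (fun j : Fin n => j.castSucc.succ)).det =
      (A.submatrix Fin.succ Fin.succ).det * (A.submatrix Fin.castSucc Fin.castSucc).det -
        (A.submatrix Fin.succ Fin.castSucc).det * (A.submatrix Fin.castSucc Fin.succ).det := by
  classical
  set σ := Fin (n + 2) × Fin (n + 2)
  let X : Matrix (Fin (n + 2)) (Fin (n + 2)) (MvPolynomial σ ℤ) :=
    Matrix.mvPolynomialX (Fin (n + 2)) (Fin (n + 2)) ℤ
  have hcancel : X.det * (X.submatrix (DesnanotJacobiAux.mid n) (DesnanotJacobiAux.mid n)).det =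
      (X.submatrix Fin.succ Fin.succ).det * (X.submatrix Fin.castSucc Fin.castSucc).det -
        (X.submatrix Fin.succ Fin.castSucc).det * (X.submatrix Fin.castSucc Fin.succ).det :=
    mul_left_cancel₀ (Matrix.det_mvPolynomialX_ne_zero (Fin (n + 2)) ℤ) (DesnanotJacobiAux.key X)
  let φ : MvPolynomial σ ℤ →+* R :=
    MvPolynomial.eval₂Hom (Int.castRingHom R) (fun p : σ => A p.1 p.2)
  have hXA : X.map φ = A := by
    simpa [φ, MvPolynomial.coe_eval₂Hom] using
      Matrix.mvPolynomialX_map_eval₂ (Int.castRingHom R) A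
  have hmap := congrArg φ hcancel
  simp only [_root_.map_mul, _root_.map_sub, RingHom.map_det, RingHom.mapMatrix_apply] at hmap
  simp only [← Matrix.submatrix_map, hXA] at hmap
  convert hmap using 3
  rfl
end

section
/- For the sequence s = (1, 0, 0, 0, ...), the Catalan-like numbers satisfy a_n(s) = binom(n, ⌊n/2⌋). -/
/-!
For `s = (1, 0, 0, …)` the whole triangle has the closed form `a_{n,j} = C(n, ⌊(n + j + 1)/2⌋)`
for `j ≥ 0`. Away from the bottom row this is Pascal's rule. In row `0` the loop term `a_{n,0}`
stands in for the missing `a_{n,-1}`, and it fits because `C(n, ⌊(n+1)/2⌋) = C(n, ⌊n/2⌋)`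
by symmetry.
Taking `j = 0` gives the central binomial coefficient.
-/

lemma Nat.choose_succ_div_two (n : ℕ) : n.choose ((n + 1) / 2) = n.choose (n / 2) :=
  Nat.choose_symm_of_eq_add (by omega)

lemma Nat.succ_choose_add_two_div_two (n j : ℕ) :
    (n + 1).choose ((n + j + 2) / 2) = n.choose ((n + j) / 2) + n.choose ((n + j + 2) / 2) := by
  rw [show (n + j + 2) / 2 = (n + j) / 2 + 1 by omega, Nat.choose_succ_succ]

theorem catalan_like_eq_choose (s : ℕ → ℝ) (hs0 : s 0 = 1) (hs : ∀ k : ℕ, 1 ≤ k → s k = 0)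
    (a : ℕ → ℤ → ℝ) (h0 : ∀ k : ℤ, a 0 k = if k = 0 then 1 else 0)
    (hneg : ∀ (n : ℕ) (k : ℤ), k < 0 → a n k = 0)
    (hrec : ∀ (n : ℕ) (k : ℤ), 0 ≤ k →
      a (n + 1) k = a n (k - 1) + s k.toNat * a n k + a n (k + 1))
    (n j : ℕ) : a n j = n.choose ((n + j + 1) / 2) := by
  induction n generalizing j with
  | zero =>
    rcases j with _ | j
    · simp [h0]
    · have hj : (j : ℤ) + 1 ≠ 0 := by omega
      simp [h0, hj, Nat.choose_eq_zero_of_lt (show 0 < (j + 2) / 2 by omega)]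
  | succ n ih =>
    rcases j with _ | m
    · have ha0 : a n 0 = n.choose ((n + 1) / 2) := by exact_mod_cast ih 0
      have ha1 : a n 1 = n.choose ((n + 0 + 2) / 2) := by exact_mod_cast ih 1
      rw [Nat.cast_zero, hrec n 0 le_rfl, hneg n _ (by norm_num), Int.toNat_zero, hs0, zero_add,
        one_mul, zero_add, ha0, ha1, Nat.choose_succ_div_two,
        show (n + 1 + 0 + 1) / 2 = (n + 0 + 2) / 2 by omega, Nat.succ_choose_add_two_div_two n 0]
      push_cast
      rfl
    · have hlo : a n ((m + 1 : ℕ) - 1) = n.choose ((n + (m + 1)) / 2) := by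
        rw [show ((m + 1 : ℕ) : ℤ) - 1 = m by omega, ih]; congr 3
      have hhi : a n ((m + 1 : ℕ) + 1) = n.choose ((n + (m + 1) + 2) / 2) := by
        rw [show ((m + 1 : ℕ) : ℤ) + 1 = (m + 2 : ℕ) by omega, ih]; congr 3
      rw [hrec n _ (Int.natCast_nonneg _), Int.toNat_natCast, hs (m + 1) (by omega), zero_mul,
        add_zero, hlo, hhi, show (n + 1 + (m + 1) + 1) / 2 = (n + (m + 1) + 2) / 2 by omega,
        Nat.succ_choose_add_two_div_two]
      push_cast
      rfl

/-- For the sequence `s = (1, 0, 0, 0, …)`, the Catalan-like numbers satisfy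
`a n 0 = binom (n, ⌊n/2⌋)`. -/
theorem catalan_like_central_binomial (s : ℕ → ℝ)
    (hs0 : s 0 = 1) (hs : ∀ k : ℕ, 1 ≤ k → s k = 0)
    (a : ℕ → ℤ → ℝ)
    (h0 : ∀ k : ℤ, a 0 k = if k = 0 then 1 else 0)
    (hneg : ∀ (n : ℕ) (k : ℤ), k < 0 → a n k = 0)
    (hrec : ∀ (n : ℕ) (k : ℤ), 0 ≤ k →
      a (n + 1) k = a n (k - 1) + s k.toNat * a n k + a n (k + 1)) :
    ∀ n : ℕ, a n 0 = (n.choose (n / 2) : ℝ) := by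
  intro n
  simpa [Nat.choose_succ_div_two] using catalan_like_eq_choose s hs0 hs a h0 hneg hrec n 0
end

section
/- For the constant sequence s = (2, 2, 2, ...), a_{n,k}(2) = ((k+1)/(n+1))·binom(2n+2, n-k); in particular a_n(2) = C_{n+1}, the shifted Catalan number. -/
/-- Binomial coefficient with integer lower index, zero for negative index. -/
noncomputable def cc (m : ℕ) (j : ℤ) : ℝ :=
  if 0 ≤ j then (m.choose j.toNat : ℝ) else 0

lemma cc_natCast (m a : ℕ) : cc m (a : ℤ) = m.choose a := by
  simp [cc]

lemma cc_neg (m : ℕ) (j : ℤ) (h : j < 0) : cc m j = 0 := by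
  simp [cc, not_le.mpr h]

lemma cc_pascal (m : ℕ) (j : ℤ) : cc (m + 1) j = cc m j + cc m (j - 1) := by
  rcases lt_trichotomy j 0 with h | h | h
  · rw [cc_neg (m+1) j h, cc_neg m j h, cc_neg m (j-1) (by omega)]; ring
  · subst h
    rw [cc_neg m (0-1) (by norm_num)]
    simp [cc]
  · obtain ⟨b, rfl⟩ : ∃ b : ℕ, j = ((b:ℤ) + 1) := ⟨(j-1).toNat, by omega⟩
    rw [show ((b:ℤ)+1) = ((b+1:ℕ):ℤ) by push_cast; ring,
      show ((b+1:ℕ):ℤ) - 1 = ((b:ℕ):ℤ) by push_cast; ring,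
      cc_natCast, cc_natCast, cc_natCast, Nat.choose_succ_succ]
    push_cast; ring

lemma cc_pascal2 (m : ℕ) (j : ℤ) :
    cc (m + 2) j = cc m j + 2 * cc m (j - 1) + cc m (j - 2) := by
  rw [show m + 2 = (m + 1) + 1 by ring, cc_pascal, cc_pascal, cc_pascal,
    show j - 1 - 1 = j - 2 by ring]
  ring

lemma cc_step (m : ℕ) (j : ℤ) :
    (cc m (j+1) - cc m j) + 2 * (cc m j - cc m (j-1)) + (cc m (j-1) - cc m (j-2))
      = cc (m+2) (j+1) - cc (m+2) j := by
  rw [cc_pascal2 m (j+1), cc_pascal2 m j, show j+1-1 = j by ring, show j+1-2 = j-1 by ring]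
  ring

lemma catalan_like_main (a : ℕ → ℤ → ℝ)
    (h0 : ∀ k : ℤ, a 0 k = if k = 0 then 1 else 0)
    (hneg : ∀ (n : ℕ) (k : ℤ), k < 0 → a n k = 0)
    (hrec : ∀ (n : ℕ) (k : ℤ), 0 ≤ k →
      a (n + 1) k = a n (k - 1) + 2 * a n k + a n (k + 1)) :
    ∀ (n : ℕ) (k : ℤ), -1 ≤ k →
      a n k = cc (2*n+1) ((n:ℤ) - k) - cc (2*n+1) ((n:ℤ) - k - 1) := by
  intro n
  induction n with
  | zero =>
    intro k hk
    rw [h0]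
    by_cases hk0 : k = 0
    · subst hk0
      rw [cc_neg (2*0+1) (((0:ℕ):ℤ) - 0 - 1) (by norm_num),
        show ((0:ℕ):ℤ) - 0 = ((0:ℕ):ℤ) by norm_num, cc_natCast]
      simp
    · rcases eq_or_lt_of_le hk with h | h
      · rw [← h,
          show ((0:ℕ):ℤ) - (-1) - 1 = ((0:ℕ):ℤ) by norm_num,
          show ((0:ℕ):ℤ) - (-1) = ((1:ℕ):ℤ) by norm_num, cc_natCast, cc_natCast]
        simp
      · have h1 : 1 ≤ k := by omega
        rw [cc_neg _ _ (by omega), cc_neg _ _ (by omega)]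
        simp [hk0]
  | succ n ih =>
    intro k hk
    rcases eq_or_lt_of_le hk with h | h
    · rw [← h, hneg _ _ (by norm_num),
        show ((n+1:ℕ):ℤ) - (-1) - 1 = ((n+1:ℕ):ℤ) by push_cast; ring,
        show ((n+1:ℕ):ℤ) - (-1) = ((n+2:ℕ):ℤ) by push_cast; ring,
        cc_natCast, cc_natCast]
      have hs : (2*(n+1)+1).choose (n+2) = (2*(n+1)+1).choose (n+1) := by
        rw [← Nat.choose_symm (by omega)]
        congr 1
        omega
      rw [hs]; ring
    · have hk0 : 0 ≤ k := by omega
      rw [hrec n k hk0, ih (k-1) (by omega), ih k (by omega), ih (k+1) (by omega)]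
      have c1 : cc (2*n+1) ((n:ℤ) - (k-1)) = cc (2*n+1) ((n:ℤ) - k + 1) :=
        congrArg _ (by ring)
      have c2 : cc (2*n+1) ((n:ℤ) - (k-1) - 1) = cc (2*n+1) ((n:ℤ) - k) :=
        congrArg _ (by ring)
      have c3 : cc (2*n+1) ((n:ℤ) - (k+1)) = cc (2*n+1) ((n:ℤ) - k - 1) :=
        congrArg _ (by ring)
      have c4 : cc (2*n+1) ((n:ℤ) - (k+1) - 1) = cc (2*n+1) ((n:ℤ) - k - 2) :=
        congrArg _ (by ring)
      have c5 : cc (2*(n+1)+1) (((n+1:ℕ):ℤ) - k) = cc ((2*n+1)+2) ((n:ℤ) - k + 1) := by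
        rw [show 2*(n+1)+1 = 2*n+1+2 by ring]
        exact congrArg _ (by push_cast; ring)
      have c6 : cc (2*(n+1)+1) (((n+1:ℕ):ℤ) - k - 1) = cc ((2*n+1)+2) ((n:ℤ) - k) := by
        rw [show 2*(n+1)+1 = 2*n+1+2 by ring]
        exact congrArg _ (by push_cast; ring)
      rw [c1, c2, c3, c4, c5, c6]
      linear_combination cc_step (2*n+1) ((n:ℤ) - k)

lemma gform (n k : ℕ) (h : k ≤ n) :
    cc (2*n+1) ((n:ℤ) - k) - cc (2*n+1) ((n:ℤ) - k - 1)
      = ((k : ℝ) + 1) / ((n : ℝ) + 1) * ((2 * n + 2).choose (n - k) : ℝ) := by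
  obtain ⟨d, rfl⟩ := Nat.exists_eq_add_of_le h
  cases d with
  | zero =>
    rw [cc_neg (2*(k+0)+1) (((k+0:ℕ):ℤ) - k - 1) (by push_cast; omega),
      show ((k+0:ℕ):ℤ) - k = ((0:ℕ):ℤ) by push_cast; ring, cc_natCast,
      show k + 0 - k = 0 by omega, Nat.choose_zero_right, Nat.choose_zero_right]
    have hne : ((k+0:ℕ):ℝ) + 1 ≠ 0 := ne_of_gt (by positivity)
    push_cast at hne ⊢
    field_simp
    ring
  | succ e =>
    have h2 : ((k+(e+1):ℕ):ℤ) - k - 1 = ((e:ℕ):ℤ) := by push_cast; ring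
    have h1 : ((k+(e+1):ℕ):ℤ) - k = ((e+1:ℕ):ℤ) := by push_cast; ring
    rw [h2, h1, cc_natCast, cc_natCast, show k + (e+1) - k = e + 1 by omega]
    have A := Nat.choose_succ_right_eq (2*(k+(e+1))+1) e
    rw [show 2*(k+(e+1))+1 - e = 2*k+e+3 by omega] at A
    have B : (2*(k+(e+1))+2).choose (e+1)
        = (2*(k+(e+1))+1).choose e + (2*(k+(e+1))+1).choose (e+1) := by
      rw [show 2*(k+(e+1))+2 = (2*(k+(e+1))+1)+1 by ring, Nat.choose_succ_succ]
    have A' : ((2*(k+(e+1))+1).choose (e+1) : ℝ) * ((e:ℝ)+1)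
        = ((2*(k+(e+1))+1).choose e : ℝ) * (2*(k:ℝ)+(e:ℝ)+3) := by
      exact_mod_cast congrArg (Nat.cast : ℕ → ℝ) A
    have B' : ((2*(k+(e+1))+2).choose (e+1) : ℝ)
        = ((2*(k+(e+1))+1).choose e : ℝ) + ((2*(k+(e+1))+1).choose (e+1) : ℝ) := by
      exact_mod_cast congrArg (Nat.cast : ℕ → ℝ) B
    have hne : ((k+(e+1):ℕ):ℝ) + 1 ≠ 0 := ne_of_gt (by positivity)
    rw [div_mul_eq_mul_div, eq_div_iff hne]
    push_cast at A' B' hne ⊢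
    linear_combination A' - ((k:ℝ)+1) * B'

/-- For the constant sequence `s = (2, 2, 2, …)`,
`a n k = ((k+1)/(n+1)) * binom (2n+2, n-k)` for `k ≤ n`; in particular
`a n 0 = catalan (n+1)`, the shifted Catalan number. -/
theorem catalan_like_type_two (a : ℕ → ℤ → ℝ)
    (h0 : ∀ k : ℤ, a 0 k = if k = 0 then 1 else 0)
    (hneg : ∀ (n : ℕ) (k : ℤ), k < 0 → a n k = 0)
    (hrec : ∀ (n : ℕ) (k : ℤ), 0 ≤ k →
      a (n + 1) k = a n (k - 1) + 2 * a n k + a n (k + 1)) :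
    (∀ n k : ℕ, k ≤ n →
      a n (k : ℤ) = ((k : ℝ) + 1) / ((n : ℝ) + 1) * ((2 * n + 2).choose (n - k) : ℝ)) ∧
    (∀ n : ℕ, a n 0 = (catalan (n + 1) : ℝ)) := by
  have main := catalan_like_main a h0 hneg hrec
  have part1 : ∀ n k : ℕ, k ≤ n →
      a n (k : ℤ) = ((k : ℝ) + 1) / ((n : ℝ) + 1) * ((2 * n + 2).choose (n - k) : ℝ) := by
    intro n k hkn
    rw [main n (k:ℤ) (by omega), gform n k hkn]
  refine ⟨part1, ?_⟩
  intro n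
  have h := part1 n 0 (Nat.zero_le n)
  rw [show ((0:ℕ):ℤ) = (0:ℤ) by norm_num] at h
  rw [h, Nat.sub_zero]
  have hc : ((n+1) + 1) * catalan (n+1) = Nat.centralBinom (n+1) :=
    succ_mul_catalan_eq_centralBinom (n+1)
  rw [Nat.centralBinom, show 2*(n+1) = 2*n+2 by ring] at hc
  have h2 := Nat.choose_succ_right_eq (2*n+2) n
  rw [show 2*n+2 - n = n+2 by omega] at h2
  have key : (2*n+2).choose n = catalan (n+1) * (n+1) := by
    have e : (2*n+2).choose n * (n+2) = (catalan (n+1) * (n+1)) * (n+2) := by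
      rw [← h2, ← hc]; ring
    exact Nat.eq_of_mul_eq_mul_right (by omega) e
  rw [show 2*n+2 = 2*n+2 from rfl, key]
  have hne : (n:ℝ) + 1 ≠ 0 := ne_of_gt (by positivity)
  push_cast
  field_simp
  ring
end

section
/- The generating function A(x) = ∑ a_n(c) xⁿ of the Catalan-like numbers of constant type c satisfies A(x) = 1 + c·x·A(x) + x²·A(x)², as an identity of formal power series; moreover ∑_{n≥0} a_{n,k}(c) xⁿ = x^k·A(x)^{k+1} for every k ≥ 0. -/
open PowerSeries

/-- The generating function `A(x) = ∑ a n 0 xⁿ` of Catalan-like numbers of constant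
type `c` satisfies `A = 1 + c x A + x² A²` as formal power series, and moreover
`∑ₙ a n k xⁿ = x^k A^(k+1)` for every `k ≥ 0`. -/
theorem catalan_like_generating_function (R : Type*) [CommRing R] (c : R)
    (a : ℕ → ℤ → R)
    (h0 : ∀ k : ℤ, a 0 k = if k = 0 then 1 else 0)
    (hneg : ∀ (n : ℕ) (k : ℤ), k < 0 → a n k = 0)
    (hrec : ∀ (n : ℕ) (k : ℤ), 0 ≤ k →
      a (n + 1) k = a n (k - 1) + c * a n k + a n (k + 1)) :
    (PowerSeries.mk fun n => a n 0) =
        1 + PowerSeries.C c * PowerSeries.X * (PowerSeries.mk fun n => a n 0) +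
          PowerSeries.X ^ 2 * (PowerSeries.mk fun n => a n 0) ^ 2 ∧
    ∀ k : ℕ, (PowerSeries.mk fun n => a n (k : ℤ)) =
        PowerSeries.X ^ k * (PowerSeries.mk fun n => a n 0) ^ (k + 1) := by
  -- convolution identity on coefficients
  have conv : ∀ n : ℕ, ∀ k : ℕ, a n ((k : ℤ) + 1) =
      ∑ m ∈ Finset.range n, a m 0 * a (n - 1 - m) (k : ℤ) := by
    intro n
    induction n with
    | zero =>
      intro k
      rw [Finset.sum_range_zero, h0, if_neg (by omega)]
    | succ n ih =>
      intro k
      have h1 := hrec n ((k : ℤ) + 1) (by omega)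
      simp only [add_sub_cancel_right] at h1
      have h3 := ih (k + 1)
      push_cast at h3
      have key : a n (k : ℤ) =
          (∑ m ∈ Finset.range n, a m 0 * a (n - 1 - m) ((k : ℤ) - 1)) + a n 0 * a 0 (k : ℤ) := by
        cases k with
        | zero =>
          simp only [Nat.cast_zero]
          rw [h0 0, if_pos rfl, mul_one, Finset.sum_eq_zero, zero_add]
          intro m hm
          rw [hneg _ _ (by omega : (0:ℤ) - 1 < 0), mul_zero]
        | succ j =>
          have hj := ih j
          have e1 : ((j + 1 : ℕ) : ℤ) - 1 = (j : ℤ) := by push_cast; ring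
          have e2 : ((j + 1 : ℕ) : ℤ) = (j : ℤ) + 1 := by push_cast; ring
          rw [e1, h0, if_neg (by omega), mul_zero, add_zero, e2]
          exact hj
      have hsum : ∑ m ∈ Finset.range n, a m 0 * a (n - m) (k : ℤ)
          = (∑ m ∈ Finset.range n, a m 0 * a (n - 1 - m) ((k : ℤ) - 1))
            + c * (∑ m ∈ Finset.range n, a m 0 * a (n - 1 - m) (k : ℤ))
            + ∑ m ∈ Finset.range n, a m 0 * a (n - 1 - m) ((k : ℤ) + 1) := by
        rw [Finset.mul_sum, ← Finset.sum_add_distrib, ← Finset.sum_add_distrib]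
        refine Finset.sum_congr rfl fun m hm => ?_
        have hm' : m < n := Finset.mem_range.mp hm
        have hnm : n - m = (n - 1 - m) + 1 := by omega
        rw [hnm, hrec _ _ (Int.natCast_nonneg k)]
        ring
      simp only [Nat.add_sub_cancel]
      rw [h1, ih k, h3, Finset.sum_range_succ, hsum, key, Nat.sub_self]
      ring
  -- the step lemma in power series form
  set A : PowerSeries R := PowerSeries.mk fun n => a n 0 with hA
  have hB : ∀ k : ℕ, (PowerSeries.mk fun n => a n ((k : ℤ) + 1)) =
      PowerSeries.X * A * (PowerSeries.mk fun n => a n (k : ℤ)) := by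
    intro k
    ext n
    rw [mul_assoc]
    cases n with
    | zero =>
      simp only [coeff_zero_eq_constantCoeff, constantCoeff_mk]
      rw [h0, if_neg (by omega)]
      simp
    | succ n =>
      rw [PowerSeries.coeff_mk, PowerSeries.coeff_succ_X_mul, PowerSeries.coeff_mul]
      rw [Finset.Nat.sum_antidiagonal_eq_sum_range_succ_mk]
      rw [conv (n + 1) k]
      simp only [Nat.add_sub_cancel, hA, PowerSeries.coeff_mk]
  -- second claim
  have claim2 : ∀ k : ℕ, (PowerSeries.mk fun n => a n (k : ℤ)) =
      PowerSeries.X ^ k * A ^ (k + 1) := by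
    intro k
    induction k with
    | zero => simp [hA]
    | succ k ih =>
      have h := hB k
      have hc : ((k : ℤ) + 1) = ((k + 1 : ℕ) : ℤ) := by push_cast; ring
      rw [hc] at h
      rw [h, ih]
      ring
  refine ⟨?_, claim2⟩
  have hB1 : (PowerSeries.mk fun n => a n (1 : ℤ)) = PowerSeries.X * A ^ 2 := by
    have := claim2 1
    simpa using this
  ext n
  cases n with
  | zero =>
    simp [h0, hA]
  | succ n =>
    have h1 := hrec n 0 le_rfl
    simp only [zero_sub, zero_add] at h1
    rw [hneg n (-1) (by omega), zero_add] at h1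
    rw [map_add, map_add]
    rw [mul_assoc (PowerSeries.C c), PowerSeries.coeff_C_mul]
    rw [PowerSeries.coeff_succ_X_mul]
    rw [PowerSeries.coeff_mk, h1]
    have h2 : (PowerSeries.coeff (R := R) (n + 1)) (PowerSeries.X ^ 2 * A ^ 2)
        = a n (1 : ℤ) := by
      have : PowerSeries.X ^ 2 * A ^ 2 = PowerSeries.X * (PowerSeries.X * A ^ 2) := by ring
      rw [this, PowerSeries.coeff_succ_X_mul, ← hB1, PowerSeries.coeff_mk]
    rw [h2]
    simp [hA]
end
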